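/- arXiv:2512.07592 — 2 statements merged into one kernel-verified Lean document; each statement's English description precedes it below -/
import Mathlib

section
/- Let G=(V,E) be a finite tree (a finite connected graph with no cycles). Then the co-2-plex polytope P(G) equals T(G). -/
open Finset
open scoped Classical

noncomputable section

variable {V : Type*} [Fintype V]

/-- A co-2-plex: a set of vertices inducing a subgraph of maximum degree at most 1. -/
def IsCo2Plex {α : Type*} (G : SimpleGraph α) (S : Finset α) : Prop :=
  ∀ u ∈ S, (S.filter fun v => G.Adj u v).card ≤ 1

/-- Incidence vector of a vertex set. -/
def chiV {α : Type*} (S : Finset α) : α → ℝ := fun v => if v ∈ S then 1 else 0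

/-- Incidence vector (on edges) of the set of edges with both endpoints in `S`. -/
def chiE {α : Type*} (G : SimpleGraph α) (S : Finset α) : G.edgeSet → ℝ :=
  fun e => if ∀ v ∈ (e : Sym2 α), v ∈ S then 1 else 0

/-- The co-2-plex polytope. -/
def co2PlexPolytope (G : SimpleGraph V) : Set (V → ℝ) :=
  convexHull ℝ {x | ∃ S : Finset V, IsCo2Plex G S ∧ x = chiV S}

/-- The extended co-2-plex polytope. -/
def co2PlexPolytopeExt (G : SimpleGraph V) : Set ((V → ℝ) × (G.edgeSet → ℝ)) :=
  convexHull ℝ {p | ∃ S : Finset V, IsCo2Plex G S ∧ p = (chiV S, chiE G S)}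

/-- δ(v): edges incident to `v`. -/
def inc (G : SimpleGraph V) (v : V) : Finset G.edgeSet :=
  univ.filter fun e => v ∈ (e : Sym2 V)

/-- E(W): edges with both endpoints in W. -/
def edgesIn (G : SimpleGraph V) (W : Finset V) : Finset G.edgeSet :=
  univ.filter fun e => ∀ v ∈ (e : Sym2 V), v ∈ W

/-- E(V \ W): edges with both endpoints outside W. -/
def edgesOut (G : SimpleGraph V) (W : Finset V) : Finset G.edgeSet :=
  univ.filter fun e => ∀ v ∈ (e : Sym2 V), v ∉ W

/-- δ(W): edges with exactly one endpoint in W. -/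
def edgesCut (G : SimpleGraph V) (W : Finset V) : Finset G.edgeSet :=
  univ.filter fun e => (∃ v ∈ (e : Sym2 V), v ∈ W) ∧ ∃ v ∈ (e : Sym2 V), v ∉ W

/-- The utter graph of `G`. -/
def utter (G : SimpleGraph V) : SimpleGraph (V ⊕ G.edgeSet) where
  Adj a b :=
    match a, b with
    | Sum.inl u, Sum.inl v => G.Adj u v
    | Sum.inl w, Sum.inr e => w ∈ (e : Sym2 V) ∨ ∃ z ∈ (e : Sym2 V), G.Adj w z
    | Sum.inr e, Sum.inl w => w ∈ (e : Sym2 V) ∨ ∃ z ∈ (e : Sym2 V), G.Adj w z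
    | Sum.inr e, Sum.inr f =>
        e ≠ f ∧ ((∃ v, v ∈ (e : Sym2 V) ∧ v ∈ (f : Sym2 V)) ∨
          ∃ a ∈ (e : Sym2 V), ∃ b ∈ (f : Sym2 V), G.Adj a b)
  symm := by
    constructor
    rintro (u | e) (v | f) h
    · exact h.symm
    · exact h
    · exact h
    · obtain ⟨hne, h⟩ := h
      refine ⟨hne.symm, ?_⟩
      rcases h with ⟨v, hv1, hv2⟩ | ⟨a, ha, b, hb, hab⟩
      · exact Or.inl ⟨v, hv2, hv1⟩
      · exact Or.inr ⟨b, hb, a, ha, hab.symm⟩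
  loopless := by
    constructor
    rintro (u | e) h
    · exact G.irrefl h
    · exact h.1 rfl

/-- An utter clique: a pair [W, F] whose union is a clique of the utter graph. -/
def IsUtterClique (G : SimpleGraph V) (W : Finset V) (F : Finset G.edgeSet) : Prop :=
  (utter G).IsClique (Sum.inl '' (W : Set V) ∪ Sum.inr '' (F : Set G.edgeSet))

/-- A maximal utter clique. -/
def IsMaxUtterClique (G : SimpleGraph V) (W : Finset V) (F : Finset G.edgeSet) : Prop :=
  IsUtterClique G W F ∧
    (∀ v ∉ W, ¬ IsUtterClique G (insert v W) F) ∧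
    (∀ e ∉ F, ¬ IsUtterClique G W (insert e F))

/-- The contraction G/F: vertices are the connected components of the spanning
subgraph (V, F); two components are adjacent iff some edge of `G` joins them. -/
def contract {α : Type*} (G : SimpleGraph α) (F : Set (Sym2 α)) :
    SimpleGraph (SimpleGraph.fromEdgeSet F).ConnectedComponent where
  Adj c d := c ≠ d ∧ ∃ u v, G.Adj u v ∧
      (SimpleGraph.fromEdgeSet F).connectedComponentMk u = c ∧
      (SimpleGraph.fromEdgeSet F).connectedComponentMk v = d
  symm := by
    constructor
    rintro c d ⟨hne, u, v, h, hu, hv⟩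
    exact ⟨hne.symm, v, u, h.symm, hv, hu⟩
  loopless := by
    constructor
    rintro c ⟨hne, _⟩
    exact hne rfl

/-- A graph is perfect if every induced subgraph has chromatic number equal to
its clique number. -/
def IsPerfect {α : Type*} (G : SimpleGraph α) : Prop :=
  ∀ s : Set α, (G.induce s).chromaticNumber = ((G.induce s).cliqueNum : ℕ∞)

/-- A graph is contraction perfect if all its contractions (by edge subsets) are perfect. -/
def ContractionPerfect (G : SimpleGraph V) : Prop :=
  ∀ F : Set (Sym2 V), F ⊆ G.edgeSet → IsPerfect (contract G F)

/-- Chordal: no induced cycle of length at least 4. -/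
def Chordal (G : SimpleGraph V) : Prop :=
  ∀ n, 4 ≤ n → IsEmpty (SimpleGraph.cycleGraph n ↪g G)

/-- Maximal clique (as a finset). -/
def IsMaxCliqueF (G : SimpleGraph V) (K : Finset V) : Prop :=
  G.IsClique (K : Set V) ∧ ∀ K' : Finset V, G.IsClique (K' : Set V) → K ⊆ K' → K = K'

/-- A 2-plex: every vertex of the induced subgraph has degree at least |K| - 2 in it. -/
def Is2Plex (G : SimpleGraph V) (K : Finset V) : Prop :=
  ∀ v ∈ K, K.card - 2 ≤ (K.filter fun u => G.Adj v u).card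

/-- α₂(G[W]): the maximum cardinality of a co-2-plex contained in `W`. -/
def co2plexNumOn (G : SimpleGraph V) (W : Finset V) : ℕ :=
  Finset.univ.sup fun S : Finset V => if S ⊆ W ∧ IsCo2Plex G S then S.card else 0

/-- Facet-defining inequality of a full-dimensional polytope in ℝ^α: a valid
inequality whose tight points contain `card α` affinely independent points. -/
def IsFacet {α : Type*} [Fintype α] (P : Set (α → ℝ)) (a : α → ℝ) (c : ℝ) : Prop :=
  (∀ x ∈ P, ∑ v, a v * x v ≤ c) ∧
  ∃ f : Fin (Fintype.card α) → (α → ℝ),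
    AffineIndependent ℝ f ∧ ∀ i, f i ∈ P ∧ ∑ v, a v * f i v = c

/-- The polytope T(G) given by bounds and the star inequalities. -/
def TPoly (G : SimpleGraph V) [DecidableRel G.Adj] : Set (V → ℝ) :=
  {x | (∀ v, 0 ≤ x v ∧ x v ≤ 1) ∧
    ∀ (w : V), ∀ W ⊆ G.neighborFinset w,
      ∑ v ∈ W, x v + ((W.card : ℝ) - 1) * x w ≤ (W.card : ℝ)}

/-- Total dual integrality of the system `A x ≤ b`. -/
def IsTDI {ι κ : Type*} [Fintype ι] [Fintype κ] (A : ι → κ → ℝ) (b : ι → ℝ) : Prop :=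
  ∀ c : κ → ℤ, ∀ m : ℝ,
    IsGreatest {t | ∃ x : κ → ℝ, (∀ i, ∑ j, A i j * x j ≤ b i) ∧ t = ∑ j, (c j : ℝ) * x j} m →
    ∃ π : ι → ℤ, (∀ i, 0 ≤ π i) ∧ (∀ j, ∑ i, (π i : ℝ) * A i j = (c j : ℝ)) ∧
      ∑ i, (π i : ℝ) * b i = m


/-!
The inclusion `co2PlexPolytope G ⊆ TPoly G` is the validity of the star inequalities. Conversely,
a point `x ∈ T(G)` of a forest is written as a probability distribution on co-2-plexes
(a `Co2PlexMixture`) with vertex marginals `x` in which, for every edge `ab`, both ends are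
chosen with the least probability `max 0 (x a + x b - 1)` that these marginals allow. It is built
by induction on the support of `x`: delete a vertex `v` having at most one neighbour `w` in the
support, decompose the rest, and add `v` to the co-2-plexes that can take it, namely those avoiding
`w` and those in which `w` is isolated. By the tightness at the edges of `w`, the latter carry
mass `x w - ∑ u ∈ N(w), max 0 (x w + x u - 1)`, and the star inequality at `w` says exactly that
this is at least the mass `max 0 (x v + x w - 1)` that the new edge `vw` requires.
-/

section Co2Plex

variable {α : Type*} {G : SimpleGraph α} {S : Finset α} {u v w : α}

@[simp] lemma chiV_of_mem (h : v ∈ S) : chiV S v = 1 := if_pos h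

@[simp] lemma chiV_of_notMem (h : v ∉ S) : chiV S v = 0 := if_neg h

lemma chiV_nonneg (S : Finset α) (v : α) : 0 ≤ chiV S v := by
  unfold chiV; split_ifs <;> norm_num

lemma chiV_le_one (S : Finset α) (v : α) : chiV S v ≤ 1 := by
  unfold chiV; split_ifs <;> norm_num

@[simp] lemma chiV_mul_self (S : Finset α) (v : α) : chiV S v * chiV S v = chiV S v := by
  unfold chiV; split_ifs <;> norm_num

lemma chiV_insert_of_ne (h : u ≠ v) : chiV (insert v S) u = chiV S u := by
  simp [chiV, h]

lemma sum_chiV (W S : Finset α) : ∑ u ∈ W, chiV S u = #(W ∩ S) := by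
  simp [chiV]

lemma isCo2Plex_iff :
    IsCo2Plex G S ↔ ∀ u ∈ S, ∀ a ∈ S, ∀ b ∈ S, G.Adj u a → G.Adj u b → a = b := by
  simp only [IsCo2Plex, Finset.card_le_one, Finset.mem_filter]
  exact forall₂_congr fun u _ => ⟨fun h a ha b hb hua hub => h a ⟨ha, hua⟩ b ⟨hb, hub⟩,
    fun h a ha b hb => h a ha.1 b hb.1 ha.2 hb.2⟩

lemma IsCo2Plex.insert (hS : IsCo2Plex G S)
    (hv : ∀ a ∈ S, ∀ b ∈ S, G.Adj v a → G.Adj v b → a = b)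
    (hsat : ∀ u ∈ S, G.Adj v u → ∀ z ∈ S, ¬ G.Adj u z) :
    IsCo2Plex G (insert v S) := by
  rw [isCo2Plex_iff] at hS ⊢
  intro u hu a ha b hb hua hub
  rw [Finset.mem_insert] at hu ha hb
  rcases hu with rfl | hu
  · rcases ha with rfl | ha
    · exact absurd hua G.irrefl
    rcases hb with rfl | hb
    · exact absurd hub G.irrefl
    exact hv a ha b hb hua hub
  rcases ha with rfl | ha <;> rcases hb with rfl | hb
  · rfl
  · exact absurd hub (hsat u hu hua.symm b hb)
  · exact absurd hua (hsat u hu hub.symm a ha)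
  · exact hS u hu a ha b hb hua hub

lemma IsCo2Plex.sum_chiV_neighborFinset_le_one [Fintype α] [DecidableRel G.Adj]
    (hS : IsCo2Plex G S) (hw : w ∈ S) : ∑ u ∈ G.neighborFinset w, chiV S u ≤ 1 := by
  rw [sum_chiV]
  norm_cast
  refine Finset.card_le_one.mpr fun a ha b hb => ?_
  simp only [Finset.mem_inter, SimpleGraph.mem_neighborFinset] at ha hb
  exact isCo2Plex_iff.mp hS w hw a ha.2 b hb.2 ha.1 hb.1

def isolatedIndicator (G : SimpleGraph α) (S : Finset α) (w : α) : ℝ :=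
  if w ∈ S ∧ ∀ u ∈ S, ¬ G.Adj w u then 1 else 0

lemma IsCo2Plex.chiV_mul_one_sub_sum_chiV [Fintype α] [DecidableRel G.Adj]
    (hS : IsCo2Plex G S) (w : α) :
    chiV S w * (1 - ∑ u ∈ G.neighborFinset w, chiV S u) = isolatedIndicator G S w := by
  unfold isolatedIndicator
  by_cases hw : w ∈ S
  · have hle := hS.sum_chiV_neighborFinset_le_one hw
    rw [sum_chiV] at hle ⊢
    norm_cast at hle
    simp only [chiV_of_mem hw, one_mul, hw, true_and]
    split_ifs with hiso
    · have hempty : G.neighborFinset w ∩ S = ∅ := by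
        ext u
        simpa using fun hadj hu => hiso u hu hadj
      simp [hempty]
    · push Not at hiso
      obtain ⟨u, hu, hadj⟩ := hiso
      have hone : #(G.neighborFinset w ∩ S) = 1 :=
        le_antisymm hle (Finset.card_pos.mpr ⟨u, by simp [hu, hadj]⟩)
      simp [hone]
  · simp [hw]

end Co2Plex

lemma Finset.sum_add_sub_one_le_iff {α : Type*} (W : Finset α) (x : α → ℝ) (w : α) :
    ∑ u ∈ W, (x w + x u - 1) ≤ x w ↔ ∑ u ∈ W, x u + ((#W : ℝ) - 1) * x w ≤ #W := by
  simp only [Finset.sum_sub_distrib, Finset.sum_add_distrib, Finset.sum_const, nsmul_eq_mul,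
    mul_one]
  constructor <;> intro h <;> linarith

section TPoly

variable {G : SimpleGraph V} [DecidableRel G.Adj] {x y : V → ℝ}

lemma chiV_mem_TPoly {S : Finset V} (hS : IsCo2Plex G S) : chiV S ∈ TPoly G := by
  refine ⟨fun v => ⟨chiV_nonneg S v, chiV_le_one S v⟩, fun w W hW => ?_⟩
  have hWS : ∑ u ∈ W, chiV S u ≤ #W := by
    rw [sum_chiV]; exact_mod_cast Finset.card_le_card Finset.inter_subset_left
  by_cases hw : w ∈ S
  · have hsub : ∑ u ∈ W, chiV S u ≤ ∑ u ∈ G.neighborFinset w, chiV S u :=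
      Finset.sum_le_sum_of_subset_of_nonneg hW fun u _ _ => chiV_nonneg S u
    have := hS.sum_chiV_neighborFinset_le_one hw
    rw [chiV_of_mem hw]; linarith
  · rw [chiV_of_notMem hw]; linarith

lemma convex_TPoly : Convex ℝ (TPoly G) := by
  intro x hx y hy a b ha hb hab
  refine ⟨fun v => ?_, fun w W hW => ?_⟩
  · obtain ⟨hx0, hx1⟩ := hx.1 v
    obtain ⟨hy0, hy1⟩ := hy.1 v
    simp only [Pi.add_apply, Pi.smul_apply, smul_eq_mul]
    constructor <;> nlinarith
  · have hxW := hx.2 w W hW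
    have hyW := hy.2 w W hW
    simp only [Pi.add_apply, Pi.smul_apply, smul_eq_mul, Finset.sum_add_distrib,
      ← Finset.mul_sum]
    nlinarith [mul_le_mul_of_nonneg_left hxW ha, mul_le_mul_of_nonneg_left hyW hb]

lemma mem_TPoly_of_le (hx : x ∈ TPoly G) (hy0 : 0 ≤ y) (hyx : y ≤ x) : y ∈ TPoly G := by
  refine ⟨fun v => ⟨hy0 v, (hyx v).trans (hx.1 v).2⟩, fun w W hW => ?_⟩
  have hxW := hx.2 w W hW
  have hsum : ∑ u ∈ W, y u ≤ ∑ u ∈ W, x u := Finset.sum_le_sum fun u _ => hyx u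
  rcases W.eq_empty_or_nonempty with rfl | hne
  · simpa using hy0 w
  · have hcard : (1 : ℝ) ≤ #W := by exact_mod_cast hne.card_pos
    nlinarith [hyx w]

lemma sum_max_le_of_mem_TPoly (hx : x ∈ TPoly G) (w : V) :
    ∑ u ∈ G.neighborFinset w, max 0 (x w + x u - 1) ≤ x w := by
  have hpos : ∑ u ∈ G.neighborFinset w, max 0 (x w + x u - 1)
      = ∑ u ∈ (G.neighborFinset w).filter (fun u => 0 < x w + x u - 1), (x w + x u - 1) := by
    rw [Finset.sum_filter]
    refine Finset.sum_congr rfl fun u _ => ?_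
    split_ifs with h
    · exact max_eq_right h.le
    · exact max_eq_left (not_lt.mp h)
  rw [hpos, Finset.sum_add_sub_one_le_iff]
  exact hx.2 w _ (Finset.filter_subset _ _)


lemma max_add_sum_max_le_of_update_mem_TPoly {v w : V} {t : ℝ} (hxv : x v = 0)
    (hvw : G.Adj v w) (hx : Function.update x v t ∈ TPoly G) :
    max 0 (t + x w - 1) + ∑ u ∈ G.neighborFinset w, max 0 (x w + x u - 1) ≤ x w := by
  have hwv : w ≠ v := hvw.ne'
  have hv : v ∈ G.neighborFinset w := (G.mem_neighborFinset w v).2 hvw.symm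
  have hxw : x w ≤ 1 := by simpa [Function.update_of_ne hwv] using (hx.1 w).2
  have key := sum_max_le_of_mem_TPoly hx w
  rw [← Finset.add_sum_erase _ _ hv] at key ⊢
  rw [Finset.sum_congr rfl fun u hu => by rw [Function.update_of_ne (Finset.ne_of_mem_erase hu)]]
    at key
  simp only [Function.update_self, Function.update_of_ne hwv] at key
  rw [hxv, max_eq_left (by linarith : x w + 0 - 1 ≤ 0), add_comm t]
  linarith

end TPoly

namespace SimpleGraph

lemma IsAcyclic.exists_mem_adj_subsingleton {G : SimpleGraph V} (hG : G.IsAcyclic)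
    {U : Finset V} (hU : U.Nonempty) :
    ∃ v ∈ U, ∀ a ∈ U, ∀ b ∈ U, G.Adj v a → G.Adj v b → a = b := by
  by_contra! h
  have hlong : ∀ n, ∃ (b a : V) (p : G.Walk b a),
      p.IsPath ∧ (∀ z ∈ p.support, z ∈ U) ∧ p.length = n := by
    intro n
    induction n with
    | zero =>
      obtain ⟨u, hu⟩ := hU
      exact ⟨u, u, .nil, .nil, by simpa using hu, rfl⟩
    | succ n ih =>
      obtain ⟨b, a, p, hp, hpU, rfl⟩ := ih
      obtain ⟨c, hcU, hbc, hc⟩ : ∃ c ∈ U, G.Adj b c ∧ c ≠ p.snd := by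
        obtain ⟨a₁, ha₁, a₂, ha₂, h₁, h₂, hne⟩ := h b (hpU b p.start_mem_support)
        by_cases h₁' : a₁ = p.snd
        · exact ⟨a₂, ha₂, h₂, h₁' ▸ hne.symm⟩
        · exact ⟨a₁, ha₁, h₁, h₁'⟩
      have hcp : c ∉ p.support := fun hc' => hc (hG.eq_snd_of_adj_start hp hbc hc')
      refine ⟨c, a, .cons hbc.symm p, hp.cons hcp, fun z hz => ?_, by simp⟩
      rw [Walk.support_cons, List.mem_cons] at hz
      rcases hz with rfl | hz
      exacts [hcU, hpU z hz]
  obtain ⟨b, a, p, hp, -, hlen⟩ := hlong (Fintype.card V)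
  exact (hlen ▸ hp.length_lt).false

end SimpleGraph

lemma exists_mem_Icc_mul_eq {a b : ℝ} (ha : 0 ≤ a) (hab : a ≤ b) :
    ∃ c ∈ Set.Icc (0 : ℝ) 1, c * b = a :=
  ⟨a / b, ⟨div_nonneg ha (ha.trans hab), div_le_one_of_le₀ hab (ha.trans hab)⟩,
    div_mul_cancel_of_imp fun hb => le_antisymm (hb ▸ hab) ha⟩

lemma Fintype.sum_prod_bool_split {ι β : Type*} [Fintype ι] (p φ : ι → ℝ) (σ τ : ι → β)
    (f : β → ℝ) :
    ∑ j : ι × Bool, p j.1 * (if j.2 then φ j.1 else 1 - φ j.1) *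
        f (if j.2 then (if φ j.1 = 0 then σ j.1 else τ j.1) else σ j.1) =
      ∑ i, p i * f (σ i) + ∑ i, p i * φ i * (f (τ i) - f (σ i)) := by
  rw [Fintype.sum_prod_type, ← Finset.sum_add_distrib]
  refine Finset.sum_congr rfl fun i _ => ?_
  by_cases h : φ i = 0 <;> simp [h]; ring

section Mixture

variable {α : Type*} {G : SimpleGraph α} {U : Finset α} {x : α → ℝ}

structure Co2PlexMixture (G : SimpleGraph α) (U : Finset α) (x : α → ℝ) where
  ι : Type
  [instFintype : Fintype ι]
  weight : ι → ℝ
  atom : ι → Finset α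
  weight_nonneg (i : ι) : 0 ≤ weight i
  sum_weight : ∑ i, weight i = 1
  isCo2Plex_atom (i : ι) : IsCo2Plex G (atom i)
  atom_subset (i : ι) : atom i ⊆ U
  sum_weight_mul_chiV (u : α) : ∑ i, weight i * chiV (atom i) u = x u
  sum_weight_mul_chiV_mul_chiV (a b : α) : G.Adj a b →
    ∑ i, weight i * (chiV (atom i) a * chiV (atom i) b) = max 0 (x a + x b - 1)

attribute [instance] Co2PlexMixture.instFintype

namespace Co2PlexMixture

def empty : Co2PlexMixture G ∅ 0 where
  ι := Unit
  weight _ := 1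
  atom _ := ∅
  weight_nonneg _ := zero_le_one
  sum_weight := by simp
  isCo2Plex_atom _ := by simp [IsCo2Plex]
  atom_subset _ := subset_rfl
  sum_weight_mul_chiV _ := by simp
  sum_weight_mul_chiV_mul_chiV _ _ _ := by simp

lemma chiV_atom_of_notMem (M : Co2PlexMixture G U x) {u : α} (hu : u ∉ U) (i : M.ι) :
    chiV (M.atom i) u = 0 :=
  chiV_of_notMem fun h => hu (M.atom_subset i h)

lemma apply_eq_zero_of_notMem (M : Co2PlexMixture G U x) {u : α} (hu : u ∉ U) : x u = 0 := by
  simp [← M.sum_weight_mul_chiV u, M.chiV_atom_of_notMem hu]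

/-- `φ i` is the probability with which `v` is added to the atom `M.atom i`. -/
structure IsInsertion (M : Co2PlexMixture G U x) (v : α) (t : ℝ) (φ : M.ι → ℝ) : Prop where
  nonneg (i : M.ι) : 0 ≤ φ i
  le_one (i : M.ι) : φ i ≤ 1
  sum_weight_mul : ∑ i, M.weight i * φ i = t
  isCo2Plex_insert (i : M.ι) : φ i ≠ 0 → IsCo2Plex G (insert v (M.atom i))
  sum_weight_mul_mul_chiV (u : α) : G.Adj v u →
    ∑ i, M.weight i * φ i * chiV (M.atom i) u = max 0 (t + x u - 1)

def extend (M : Co2PlexMixture G U x) {v : α} {t : ℝ} {φ : M.ι → ℝ} (hv : v ∉ U)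
    (hφ : M.IsInsertion v t φ) : Co2PlexMixture G (insert v U) (Function.update x v t) where
  ι := M.ι × Bool
  weight j := M.weight j.1 * if j.2 then φ j.1 else 1 - φ j.1
  -- atoms of weight zero are left unchanged, so that every atom stays a co-2-plex
  atom j := if j.2 then (if φ j.1 = 0 then M.atom j.1 else insert v (M.atom j.1)) else M.atom j.1
  weight_nonneg := by
    rintro ⟨i, _ | _⟩
    · exact mul_nonneg (M.weight_nonneg i) (sub_nonneg.2 (hφ.le_one i))
    · exact mul_nonneg (M.weight_nonneg i) (hφ.nonneg i)
  sum_weight := by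
    simpa [M.sum_weight] using
      Fintype.sum_prod_bool_split M.weight φ M.atom (fun i => insert v (M.atom i)) fun _ => 1
  isCo2Plex_atom := by
    rintro ⟨i, _ | _⟩
    · exact M.isCo2Plex_atom i
    · simp only [↓reduceIte]
      split_ifs with h
      exacts [M.isCo2Plex_atom i, hφ.isCo2Plex_insert i h]
  atom_subset := by
    rintro ⟨i, _ | _⟩
    · exact (M.atom_subset i).trans (Finset.subset_insert v U)
    · simp only [↓reduceIte]
      split_ifs
      exacts [(M.atom_subset i).trans (Finset.subset_insert v U),
        Finset.insert_subset_insert v (M.atom_subset i)]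
  sum_weight_mul_chiV u := by
    rw [Fintype.sum_prod_bool_split M.weight φ M.atom (fun i => insert v (M.atom i))
      fun S => chiV S u]
    by_cases huv : u = v
    · subst huv
      simp [M.chiV_atom_of_notMem hv, hφ.sum_weight_mul]
    · simp [chiV_insert_of_ne huv, M.sum_weight_mul_chiV, huv]
  sum_weight_mul_chiV_mul_chiV a b hab := by
    wlog hb : b ≠ v generalizing a b
    · have ha : a ≠ v := fun ha => hab.ne (ha.trans (not_not.mp hb).symm)
      simpa only [mul_comm (chiV _ a), add_comm (Function.update x v t a)] using
        this b a hab.symm ha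
    rw [Fintype.sum_prod_bool_split M.weight φ M.atom (fun i => insert v (M.atom i))
      fun S => chiV S a * chiV S b]
    by_cases ha : a = v
    · subst ha
      simp [M.chiV_atom_of_notMem hv, chiV_insert_of_ne hb, hb, hφ.sum_weight_mul_mul_chiV b hab]
    · simp [chiV_insert_of_ne ha, chiV_insert_of_ne hb, M.sum_weight_mul_chiV_mul_chiV a b hab,
        ha, hb]

lemma exists_isInsertion_of_forall_not_adj (M : Co2PlexMixture G U x) {v : α} {t : ℝ}
    (ht₀ : 0 ≤ t) (ht₁ : t ≤ 1) (hv : ∀ u ∈ U, ¬ G.Adj v u) : ∃ φ, M.IsInsertion v t φ := by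
  refine ⟨fun _ => t, fun _ => ht₀, fun _ => ht₁, by simp [← Finset.sum_mul, M.sum_weight],
    fun i _ => ?_, fun u hvu => ?_⟩
  · exact (M.isCo2Plex_atom i).insert
      (fun a ha _ _ hva _ => absurd hva (hv a (M.atom_subset i ha)))
      fun u hu hvu => absurd hvu (hv u (M.atom_subset i hu))
  · have hu : u ∉ U := fun hu => hv u hu hvu
    simp [M.chiV_atom_of_notMem hu, M.apply_eq_zero_of_notMem hu, ht₁]

lemma sum_weight_mul_isolatedIndicator [Fintype α] [DecidableRel G.Adj]
    (M : Co2PlexMixture G U x) (w : α) :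
    ∑ i, M.weight i * isolatedIndicator G (M.atom i) w =
      x w - ∑ u ∈ G.neighborFinset w, max 0 (x w + x u - 1) := by
  have hedge :
      ∑ i, M.weight i * (chiV (M.atom i) w * ∑ u ∈ G.neighborFinset w, chiV (M.atom i) u) =
        ∑ u ∈ G.neighborFinset w, max 0 (x w + x u - 1) := by
    simp_rw [Finset.mul_sum]
    rw [Finset.sum_comm]
    exact Finset.sum_congr rfl fun u hu =>
      M.sum_weight_mul_chiV_mul_chiV w u ((G.mem_neighborFinset w u).1 hu)
  rw [← hedge, ← M.sum_weight_mul_chiV w, ← Finset.sum_sub_distrib]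
  refine Finset.sum_congr rfl fun i _ => ?_
  rw [← (M.isCo2Plex_atom i).chiV_mul_one_sub_sum_chiV w]
  ring

lemma exists_isInsertion_of_adj [Fintype α] [DecidableRel G.Adj] (M : Co2PlexMixture G U x)
    {v w : α} {t : ℝ} (hv : v ∉ U) (hvw : G.Adj v w) (hw : ∀ u ∈ U, G.Adj v u → u = w)
    (hx : Function.update x v t ∈ TPoly G) : ∃ φ, M.IsInsertion v t φ := by
  obtain ⟨ht₀, ht₁⟩ : 0 ≤ t ∧ t ≤ 1 := by simpa using hx.1 v
  have hxw : x w ≤ 1 := by simpa [Function.update_of_ne hvw.ne'] using (hx.1 w).2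
  set m := max 0 (t + x w - 1)
  have hmB : m + ∑ u ∈ G.neighborFinset w, max 0 (x w + x u - 1) ≤ x w :=
    max_add_sum_max_le_of_update_mem_TPoly (M.apply_eq_zero_of_notMem hv) hvw hx
  have hm₁ : t + x w - 1 ≤ m := le_max_right _ _
  obtain ⟨c₁, ⟨hc₁₀, hc₁₁⟩, hc₁⟩ :=
    exists_mem_Icc_mul_eq (a := m) (le_max_left _ _) (le_sub_iff_add_le.2 hmB)
  obtain ⟨c₂, ⟨hc₂₀, hc₂₁⟩, hc₂⟩ := exists_mem_Icc_mul_eq (a := t - m)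
    (sub_nonneg.2 (max_le ht₀ (by linarith))) (by linarith : t - m ≤ 1 - x w)
  have hP : ∑ i, M.weight i * (1 - chiV (M.atom i) w) = 1 - x w := by
    simp [mul_sub, Finset.sum_sub_distrib, M.sum_weight, M.sum_weight_mul_chiV]
  -- `v` joins an atom avoiding `w` with probability `c₂`, one in which `w` is isolated with `c₁`
  refine ⟨fun i => c₂ * (1 - chiV (M.atom i) w) + c₁ * isolatedIndicator G (M.atom i) w,
    fun i => ?_, fun i => ?_, ?_, fun i hi => ?_, fun u hvu => ?_⟩
  · by_cases hwS : w ∈ M.atom i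
    · simp only [isolatedIndicator, chiV_of_mem hwS, hwS, true_and]; split_ifs <;> linarith
    · simpa [isolatedIndicator, hwS] using hc₂₀
  · by_cases hwS : w ∈ M.atom i
    · simp only [isolatedIndicator, chiV_of_mem hwS, hwS, true_and]; split_ifs <;> linarith
    · simpa [isolatedIndicator, hwS] using hc₂₁
  · rw [← add_sub_cancel m t, ← hc₂, ← hc₁, ← hP, ← M.sum_weight_mul_isolatedIndicator,
      Finset.mul_sum, Finset.mul_sum, ← Finset.sum_add_distrib]
    exact Finset.sum_congr rfl fun i _ => by ring
  · refine (M.isCo2Plex_atom i).insert (fun a ha b hb hva hvb => ?_) fun u hu hvu z hz huz => ?_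
    · rw [hw a (M.atom_subset i ha) hva, hw b (M.atom_subset i hb) hvb]
    · obtain rfl := hw u (M.atom_subset i hu) hvu
      have hiso : ¬ ∀ u' ∈ M.atom i, ¬ G.Adj u u' := fun h => h z hz huz
      simp [isolatedIndicator, hu, hiso] at hi
  · by_cases huw : u = w
    · subst huw
      have hpt : ∀ i, M.weight i * (c₂ * (1 - chiV (M.atom i) u) +
          c₁ * isolatedIndicator G (M.atom i) u) * chiV (M.atom i) u =
            c₁ * (M.weight i * isolatedIndicator G (M.atom i) u) := by
        intro i
        by_cases huS : u ∈ M.atom i <;> simp [isolatedIndicator, huS, mul_comm]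
      rw [Finset.sum_congr rfl fun i _ => hpt i, ← Finset.mul_sum,
        M.sum_weight_mul_isolatedIndicator, hc₁]
    · have hu : u ∉ U := fun hu => huw (hw u hu hvu)
      simp [M.chiV_atom_of_notMem hu, M.apply_eq_zero_of_notMem hu, ht₁]

lemma mem_co2PlexPolytope (M : Co2PlexMixture G U x) : x ∈ co2PlexPolytope G := by
  have hx : x = ∑ i, M.weight i • chiV (M.atom i) := by
    funext u
    simp [Finset.sum_apply, M.sum_weight_mul_chiV]
  rw [hx]
  exact (convex_convexHull ℝ _).sum_mem (fun i _ => M.weight_nonneg i) M.sum_weight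
    fun i _ => subset_convexHull ℝ _ ⟨M.atom i, M.isCo2Plex_atom i, rfl⟩

end Co2PlexMixture

end Mixture

namespace SimpleGraph

variable {G : SimpleGraph V} [DecidableRel G.Adj]

theorem IsAcyclic.nonempty_co2PlexMixture (hG : G.IsAcyclic) (U : Finset V) {x : V → ℝ}
    (hx : x ∈ TPoly G) (hxU : ∀ v ∉ U, x v = 0) : Nonempty (Co2PlexMixture G U x) := by
  induction U using Finset.strongInduction generalizing x with
  | H U ih =>
  rcases U.eq_empty_or_nonempty with rfl | hU
  · obtain rfl : x = 0 := funext fun v => hxU v (Finset.notMem_empty v)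
    exact ⟨.empty⟩
  obtain ⟨v, hvU, hleaf⟩ := hG.exists_mem_adj_subsingleton hU
  have hx' : Function.update x v 0 ∈ TPoly G :=
    mem_TPoly_of_le hx (le_update_iff.2 ⟨le_rfl, fun u _ => (hx.1 u).1⟩)
      (update_le_iff.2 ⟨(hx.1 v).1, fun u _ => le_rfl⟩)
  obtain ⟨M⟩ := ih (U.erase v) (Finset.erase_ssubset hvU) hx' fun u hu => by
    rcases eq_or_ne u v with rfl | huv
    · simp
    · simpa [huv] using hxU u fun h => hu (Finset.mem_erase.2 ⟨huv, h⟩)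
  have hv : v ∉ U.erase v := Finset.notMem_erase v U
  obtain ⟨φ, hφ⟩ : ∃ φ, M.IsInsertion v (x v) φ := by
    by_cases hadj : ∃ w ∈ U.erase v, G.Adj v w
    · obtain ⟨w, hw, hvw⟩ := hadj
      refine M.exists_isInsertion_of_adj hv hvw (fun u hu hvu => ?_) (by simpa using hx)
      exact hleaf u (Finset.mem_of_mem_erase hu) w (Finset.mem_of_mem_erase hw) hvu hvw
    · push Not at hadj
      exact M.exists_isInsertion_of_forall_not_adj (hx.1 v).1 (hx.1 v).2 hadj
  have M' := M.extend hv hφ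
  rw [Finset.insert_erase hvU, Function.update_idem, Function.update_eq_self] at M'
  exact ⟨M'⟩

theorem IsAcyclic.co2PlexPolytope_eq_TPoly (hG : G.IsAcyclic) : co2PlexPolytope G = TPoly G :=
  Set.Subset.antisymm
    (convexHull_min (by rintro _ ⟨S, hS, rfl⟩; exact chiV_mem_TPoly hS) convex_TPoly)
    fun _ hx => (hG.nonempty_co2PlexMixture Finset.univ hx (by simp)).some.mem_co2PlexPolytope

end SimpleGraph

/-- For a tree, the co-2-plex polytope equals T(G). -/
theorem stmt11 (G : SimpleGraph V) [DecidableRel G.Adj] (htree : G.IsTree) :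
    co2PlexPolytope G = TPoly G :=
  htree.isAcyclic.co2PlexPolytope_eq_TPoly

end
end

section
/- Let G=(V,E) be a finite simple graph and K a 2-plex of G. Then K can be partitioned into two sets K₁ and K₂ such that K₁ and K₂ are both cliques of G and both [K₁, E(K₂)] and [K₂, E(K₁)] are utter cliques of G. -/
open Finset
open scoped Classical

noncomputable section

variable {V : Type*} [Fintype V]

/-! Within a 2-plex the non-edges form a matching, so putting the larger endpoint of each non-edge
(in a fixed well-ordering of the vertices) into `K₂` and all other vertices into `K₁` yields two
cliques. A vertex `w` of one part misses at most one vertex of the other, hence sees an endpoint of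
every edge `ab` there; two edges inside a clique are joined by an edge or share an endpoint. -/

section TwoPlex

variable {α : Type*} {G : SimpleGraph α} {K : Finset α}

theorem Is2Plex.eq_of_not_adj (hK : Is2Plex G K) {v a b : α} (hv : v ∈ K) (ha : a ∈ K)
    (hb : b ∈ K) (hav : a ≠ v) (hbv : b ≠ v) (hva : ¬ G.Adj v a) (hvb : ¬ G.Adj v b) :
    a = b := by
  by_contra hab
  -- `v` is one of its own non-neighbours, so `{v, a, b}` exceeds the two a 2-plex allows.
  have hsub : {v, a, b} ⊆ K.filter fun u => ¬ G.Adj v u := by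
    simp [insert_subset_iff, hv, ha, hb, hva, hvb]
  have hthree : ({v, a, b} : Finset α).card = 3 := by
    rw [card_insert_of_notMem (by simp [hav.symm, hbv.symm]), card_pair hab]
  have hsplit : (K.filter fun u => G.Adj v u).card + (K.filter fun u => ¬ G.Adj v u).card =
      K.card := card_filter_add_card_filter_not _
  have := card_le_card hsub
  have := hK v hv
  omega

theorem Is2Plex.adj_or_adj_of_disjoint (hK : Is2Plex G K) {W U : Finset α} (hW : W ⊆ K)
    (hU : U ⊆ K) (hWU : Disjoint W U) :
    ∀ w ∈ W, ∀ a ∈ U, ∀ b ∈ U, a ≠ b → G.Adj w a ∨ G.Adj w b := by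
  intro w hw a ha b hb hab
  by_contra! h
  have hwU : w ∉ U := disjoint_left.mp hWU hw
  exact hab (hK.eq_of_not_adj (hW hw) (hU ha) (hU hb) (ne_of_mem_of_not_mem ha hwU)
    (ne_of_mem_of_not_mem hb hwU) h.1 h.2)

theorem Is2Plex.exists_partition_isClique (hK : Is2Plex G K) :
    ∃ K₁ K₂ : Finset α, K₁ ∪ K₂ = K ∧ Disjoint K₁ K₂ ∧
      G.IsClique (K₁ : Set α) ∧ G.IsClique (K₂ : Set α) := by
  set K₁ := K.filter fun v => ∀ u ∈ K, u ≠ v → ¬ G.Adj v u → WellOrderingRel v u with hK₁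
  refine ⟨K₁, K \ K₁, union_sdiff_of_subset (filter_subset _ _), disjoint_sdiff, ?_, ?_⟩
  · intro a ha b hb hab
    by_contra hn
    simp only [hK₁, coe_filter, Set.mem_ofPred_eq] at ha hb
    exact asymm (ha.2 b hb.1 hab.symm hn) (hb.2 a ha.1 hab (hn ∘ G.adj_symm))
  · intro a ha b hb hab
    simp only [hK₁, coe_sdiff, Set.mem_sdiff, mem_coe, mem_filter, not_and, not_forall] at ha hb
    by_contra hn
    obtain ⟨u, hu, hua, hau, hab'⟩ := ha.2 ha.1
    obtain ⟨u', hu', hu'b, hbu', hba'⟩ := hb.2 hb.1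
    rw [hK.eq_of_not_adj ha.1 hu hb.1 hua hab.symm hau hn] at hab'
    rw [hK.eq_of_not_adj hb.1 hu' ha.1 hu'b hab hbu' (hn ∘ G.adj_symm)] at hba'
    exact (trichotomous_of WellOrderingRel a b).elim hab' (·.elim hab hba')

end TwoPlex

section UtterClique

variable {G : SimpleGraph V}

theorem mk_mem_edgesIn {U : Finset V} {a b : V} (hab : s(a, b) ∈ G.edgeSet) :
    ⟨s(a, b), hab⟩ ∈ edgesIn G U ↔ a ∈ U ∧ b ∈ U := by
  simp [edgesIn]

theorem isUtterClique_edgesIn {W U : Finset V} (hW : G.IsClique (W : Set V))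
    (hU : G.IsClique (U : Set V))
    (hWU : ∀ w ∈ W, ∀ a ∈ U, ∀ b ∈ U, a ≠ b → G.Adj w a ∨ G.Adj w b) :
    IsUtterClique G W (edgesIn G U) := by
  have vertex_edge : ∀ w ∈ W, ∀ e ∈ edgesIn G U, (utter G).Adj (Sum.inl w) (Sum.inr e) := by
    rintro w hw ⟨⟨a, b⟩, hab⟩ he
    obtain ⟨ha, hb⟩ := (mk_mem_edgesIn hab).mp he
    rcases hWU w hw a ha b hb (G.ne_of_adj hab) with h | h
    exacts [Or.inr ⟨a, Sym2.mem_mk_left a b, h⟩, Or.inr ⟨b, Sym2.mem_mk_right a b, h⟩]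
  have edge_edge : ∀ e ∈ edgesIn G U, ∀ f ∈ edgesIn G U, e ≠ f →
      (utter G).Adj (Sum.inr e) (Sum.inr f) := by
    rintro ⟨⟨a, b⟩, hab⟩ he ⟨⟨c, d⟩, hcd⟩ hf hne
    refine ⟨hne, ?_⟩
    obtain ⟨ha, -⟩ := (mk_mem_edgesIn hab).mp he
    obtain ⟨hc, -⟩ := (mk_mem_edgesIn hcd).mp hf
    by_cases hac : a = c
    · exact Or.inl ⟨a, Sym2.mem_mk_left a b, hac ▸ Sym2.mem_mk_left c d⟩
    · exact Or.inr ⟨a, Sym2.mem_mk_left a b, c, Sym2.mem_mk_left c d, hU ha hc hac⟩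
  rintro x (⟨w, hw, rfl⟩ | ⟨e, he, rfl⟩) y (⟨w', hw', rfl⟩ | ⟨f, hf, rfl⟩) hne
  · exact hW hw hw' (hne ∘ congrArg _)
  · exact vertex_edge w hw f hf
  · exact (vertex_edge w' hw' e he).symm
  · exact edge_edge e he f hf (hne ∘ congrArg _)

end UtterClique

/-- Every 2-plex K can be partitioned into two cliques K₁, K₂
such that [K₁, E(K₂)] and [K₂, E(K₁)] are utter cliques. -/
theorem stmt18 (G : SimpleGraph V) (K : Finset V) (hK : Is2Plex G K) :
    ∃ K₁ K₂ : Finset V, K₁ ∪ K₂ = K ∧ Disjoint K₁ K₂ ∧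
      G.IsClique (K₁ : Set V) ∧ G.IsClique (K₂ : Set V) ∧
      IsUtterClique G K₁ (edgesIn G K₂) ∧ IsUtterClique G K₂ (edgesIn G K₁) := by
  obtain ⟨K₁, K₂, hunion, hdisj, hK₁, hK₂⟩ := hK.exists_partition_isClique
  have h₁ : K₁ ⊆ K := hunion ▸ subset_union_left
  have h₂ : K₂ ⊆ K := hunion ▸ subset_union_right
  exact ⟨K₁, K₂, hunion, hdisj, hK₁, hK₂,
    isUtterClique_edgesIn hK₁ hK₂ (hK.adj_or_adj_of_disjoint h₁ h₂ hdisj),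
    isUtterClique_edgesIn hK₂ hK₁ (hK.adj_or_adj_of_disjoint h₂ h₁ hdisj.symm)⟩

end
end
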